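/- arXiv:2504.07770 — 7 statements merged into one kernel-verified Lean document; each statement's English description precedes it below -/
import Mathlib

section
/- For every natural number n ≥ 4, the sum over k from 0 to floor((n-4)/2) of (n-3-2k) * ((k+1)*n - 3*C(k+2,2)) equals C(n,4) - X(n), where X(n) = (1/4) * floor(n/2) * floor((n-1)/2) * floor((n-2)/2) * floor((n-3)/2). -/
lemma sum_key (a b : ℚ) (N : ℕ) :
    ∑ k ∈ Finset.range N, (a - 2*k) * ((k + 1)*b - 3 * ((k + 2).choose 2 : ℚ)) =
      (-3/2)*N + (2/3)*N*b + (-1)*N*a + (1/2)*N*a*b + (-3/4)*N^2 + (-3/2)*N^2*a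
        + (1/2)*N^2*a*b + (3/2)*N^3 + (-2/3)*N^3*b + (-1/2)*N^3*a + (3/4)*N^4 := by
  induction N with
  | zero => simp
  | succ N ih =>
    rw [Finset.sum_range_succ, ih, Nat.cast_choose_two]
    push_cast
    ring

lemma ch3 (n : ℕ) : ((n + 3).choose 3 : ℚ) * 6 = (n+3)*(n+2)*(n+1) := by
  induction n with
  | zero => norm_num
  | succ n ih =>
    have h : (n + 4).choose 3 = (n+3).choose 2 + (n+3).choose 3 := by
      rw [show n + 4 = (n+3) + 1 by ring, Nat.choose_succ_succ]
    rw [show n + 1 + 3 = n + 4 by ring, h]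
    push_cast [Nat.cast_choose_two]
    push_cast at ih
    linear_combination ih

lemma ch4 (n : ℕ) : ((n + 4).choose 4 : ℚ) * 24 = (n+4)*(n+3)*(n+2)*(n+1) := by
  induction n with
  | zero => norm_num
  | succ n ih =>
    have h : (n + 5).choose 4 = (n+4).choose 3 + (n+4).choose 4 := by
      rw [show n + 5 = (n+4) + 1 by ring, Nat.choose_succ_succ]
    have h3 := ch3 (n+1)
    rw [show n + 1 + 3 = n + 4 from by ring] at h3
    rw [show n + 1 + 4 = n + 5 by ring, h]
    push_cast
    push_cast at ih h3
    linear_combination ih + 4*h3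

theorem stmt_1 (n : ℕ) (hn : 4 ≤ n) :
    ∑ k ∈ Finset.range ((n - 4)/2 + 1),
        ((n : ℚ) - 3 - 2*k) * ((k + 1)*n - 3 * ((k + 2).choose 2)) =
      (n.choose 4 : ℚ) -
        1/4 * ((n/2 : ℕ) : ℚ) * (((n-1)/2 : ℕ) : ℚ) * (((n-2)/2 : ℕ) : ℚ) * (((n-3)/2 : ℕ) : ℚ) := by
  obtain ⟨m, rfl | rfl⟩ : ∃ m, n = 2*m + 4 ∨ n = 2*m + 5 := ⟨(n - 4)/2, by omega⟩
  · have e1 : (2*m + 4 - 4)/2 = m := by omega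
    have e2 : (2*m + 4)/2 = m + 2 := by omega
    have e3 : (2*m + 4 - 1)/2 = m + 1 := by omega
    have e4 : (2*m + 4 - 2)/2 = m + 1 := by omega
    have e5 : (2*m + 4 - 3)/2 = m := by omega
    have hch := ch4 (2*m)
    rw [e1, e2, e3, e4, e5, sum_key (((2*m + 4 : ℕ) : ℚ) - 3) ((2*m + 4 : ℕ) : ℚ) (m + 1)]
    push_cast at hch ⊢
    linear_combination -hch/24
  · have e1 : (2*m + 5 - 4)/2 = m := by omega
    have e2 : (2*m + 5)/2 = m + 2 := by omega
    have e3 : (2*m + 5 - 1)/2 = m + 2 := by omega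
    have e4 : (2*m + 5 - 2)/2 = m + 1 := by omega
    have e5 : (2*m + 5 - 3)/2 = m + 1 := by omega
    have hch := ch4 (2*m + 1)
    rw [show 2*m + 1 + 4 = 2*m + 5 from by ring] at hch
    rw [e1, e2, e3, e4, e5, sum_key (((2*m + 5 : ℕ) : ℚ) - 3) ((2*m + 5 : ℕ) : ℚ) (m + 1)]
    push_cast at hch ⊢
    linear_combination -hch/24
end

section
/- Let V be a configuration of n ≥ 4 vectors in R^3 in general position. Define f*_{4,t}(V) as the number of sign vectors in {-1,0,+1}^n arising from nontrivial linear dependencies of V with exactly 4 nonzero entries, of which exactly t are negative. Then f*_{4,0}(V) + f*_{4,1}(V) + (1/2) f*_{4,2}(V) = C(n,4). -/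
/-- The set of sign vectors of nontrivial linear dependencies of a configuration. -/
def depPatterns (n : ℕ) (V : Fin n → (Fin 3 → ℝ)) : Set (Fin n → ℝ) :=
  {σ | ∃ l : Fin n → ℝ, l ≠ 0 ∧ (∑ i, l i • V i) = 0 ∧ σ = fun i => Real.sign (l i)}

/-- `fstar4 n V t` counts the dependency sign patterns of `V` with exactly 4 nonzero
entries, exactly `t` of which are negative. -/
noncomputable def fstar4 (n : ℕ) (V : Fin n → (Fin 3 → ℝ)) (t : ℕ) : ℕ :=
  Set.ncard {σ ∈ depPatterns n V |
    (Finset.univ.filter (fun i => σ i ≠ 0)).card = 4 ∧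
    (Finset.univ.filter (fun i => σ i < 0)).card = t}

/-!
In general position in `ℝ³`, any four vectors admit a linear dependency, unique up to a scalar,
and it involves all four of them, since three of them are independent. So each 4-subset `S` is
the support of exactly two sign patterns `±σ`, and if `σ` has `t` minus signs then `-σ` has
`4 - t`. With the weights `w 0 = w 1 = 1`, `w 2 = 1/2`, `w 3 = w 4 = 0` one has
`w t + w (4 - t) = 1`, so the left-hand side, which is `∑ σ, w (#negatives of σ)`, counts every
4-subset exactly once.
-/

open Finset Module

section GeneralPosition

variable {ι K M : Type*} [Fintype ι] [Field K] [AddCommGroup M] [Module K M]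

variable (K) in
def InGeneralPosition (v : ι → M) : Prop :=
  ∀ s : Finset ι, #s = finrank K M → LinearIndepOn K v s

variable {v : ι → M}

theorem InGeneralPosition.linearIndepOn (hv : InGeneralPosition K v) {s : Finset ι}
    (hs : #s ≤ finrank K M) (hd : finrank K M ≤ Fintype.card ι) : LinearIndepOn K v s := by
  obtain ⟨t, hst, ht⟩ := Finset.exists_superset_card_eq hs hd
  exact (hv t ht).mono (by exact_mod_cast hst)

theorem InGeneralPosition.eq_zero_of_sum_smul_eq_zero (hv : InGeneralPosition K v)
    (hd : finrank K M ≤ Fintype.card ι) {s : Finset ι} (hs : #s ≤ finrank K M)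
    {l : ι → K} (hl : ∑ i, l i • v i = 0) (hsupp : ∀ i ∉ s, l i = 0) : l = 0 := by
  have hls : ∑ i ∈ s, l i • v i = 0 := by
    rw [Finset.sum_subset (subset_univ s) fun i _ hi => by simp [hsupp i hi], hl]
  funext i
  by_cases hi : i ∈ s
  · exact linearIndepOn_finset_iff.mp (hv.linearIndepOn hs hd) l hls i hi
  · exact hsupp i hi

theorem InGeneralPosition.eq_smul_of_support_subset (hv : InGeneralPosition K v)
    {S : Finset ι} (hS : #S = finrank K M + 1) {l₀ : ι → K} (hl₀ : ∑ i, l₀ i • v i = 0)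
    (hsupp₀ : ∀ i, l₀ i ≠ 0 ↔ i ∈ S) {l : ι → K} (hl : ∑ i, l i • v i = 0)
    (hsupp : ∀ i ∉ S, l i = 0) : ∃ c : K, l = c • l₀ := by
  classical
  have hd : finrank K M ≤ Fintype.card ι := by have := card_le_univ S; omega
  obtain ⟨j, hj⟩ : S.Nonempty := card_pos.mp (by omega)
  have hl₀j : l₀ j ≠ 0 := (hsupp₀ j).mpr hj
  refine ⟨l j / l₀ j, sub_eq_zero.mp (hv.eq_zero_of_sum_smul_eq_zero hd (s := S.erase j)
    (by simp [card_erase_of_mem hj, hS]) ?_ fun i hi => ?_)⟩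
  · simp only [Pi.sub_apply, Pi.smul_apply, smul_eq_mul, sub_smul, mul_smul, sum_sub_distrib,
      ← smul_sum, hl, hl₀, smul_zero, sub_zero]
  · rcases eq_or_ne i j with rfl | hij
    · simp [hl₀j]
    · have hiS : i ∉ S := by simpa [hij] using hi
      simp [hsupp i hiS, not_not.mp ((hsupp₀ i).not.mpr hiS)]

variable [Module.Finite K M]

theorem InGeneralPosition.exists_sum_smul_eq_zero_of_card_eq (hv : InGeneralPosition K v)
    {S : Finset ι} (hS : #S = finrank K M + 1) :
    ∃ l : ι → K, ∑ i, l i • v i = 0 ∧ ∀ i, l i ≠ 0 ↔ i ∈ S := by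
  classical
  have hd : finrank K M + 1 ≤ Fintype.card ι := hS ▸ card_le_univ S
  have hdep : ¬LinearIndepOn K v S := fun h => by
    have := h.fintype_card_le_finrank
    simp [hS] at this
  obtain ⟨f, hf, j, hj, hfj⟩ := not_linearIndepOn_finset_iff.mp hdep
  set l : ι → K := fun i => if i ∈ S then f i else 0
  have hl : ∑ i, l i • v i = 0 := by
    simpa [l, ite_smul, Finset.sum_ite_mem] using hf
  refine ⟨l, hl, fun i => ⟨fun hi => by by_contra h; simp [l, h] at hi, fun hi h0 => ?_⟩⟩
  have : l = 0 := hv.eq_zero_of_sum_smul_eq_zero (by omega) (s := S.erase i)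
    (by simp [card_erase_of_mem hi, hS]) hl fun k hk => by
      rcases eq_or_ne k i with rfl | hki
      · exact h0
      · simp_all [l]
  exact hfj (by simpa [l, hj] using congrFun this j)

end GeneralPosition

theorem Real.sign_mul (a b : ℝ) : Real.sign (a * b) = Real.sign a * Real.sign b := by
  rcases lt_trichotomy a 0 with ha | rfl | ha <;> rcases lt_trichotomy b 0 with hb | rfl | hb <;>
    simp [Real.sign_of_neg, Real.sign_of_pos, mul_pos_of_neg_of_neg, mul_neg_of_pos_of_neg,
      mul_neg_of_neg_of_pos, *]

theorem card_filter_lt_zero_add_card_filter_neg_lt_zero {ι α : Type*} [Fintype ι]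
    [AddCommGroup α] [LinearOrder α] [IsOrderedAddMonoid α] (σ : ι → α) :
    #{i | σ i < 0} + #{i | (-σ) i < 0} = #{i | σ i ≠ 0} := by
  classical
  have hdisj : Disjoint ({i | σ i < 0} : Finset ι) ({i | (-σ) i < 0} : Finset ι) :=
    disjoint_filter.mpr fun i _ h h' => by simp at h'; exact h.asymm h'
  rw [← card_union_of_disjoint hdisj, ← filter_or]
  congr 1
  ext i
  simp [lt_or_lt_iff_ne]

section Patterns

variable {n : ℕ} {V : Fin n → Fin 3 → ℝ} {σ : Fin n → ℝ}

theorem neg_mem_depPatterns (hσ : σ ∈ depPatterns n V) : -σ ∈ depPatterns n V := by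
  obtain ⟨l, hl, hlV, rfl⟩ := hσ
  exact ⟨-l, neg_ne_zero.mpr hl, by simp [hlV], by ext; simp [Real.sign_neg]⟩

theorem mem_piFinset_of_mem_depPatterns (hσ : σ ∈ depPatterns n V) :
    σ ∈ Fintype.piFinset fun _ => ({-1, 0, 1} : Finset ℝ) := by
  obtain ⟨l, -, -, rfl⟩ := hσ
  simpa using fun i => Real.sign_apply_eq (l i)

-- The `piFinset` factor only makes the set finite: sign patterns take values in `{-1, 0, 1}`.
open Classical in
noncomputable def patterns4 (n : ℕ) (V : Fin n → Fin 3 → ℝ) : Finset (Fin n → ℝ) :=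
  {σ ∈ Fintype.piFinset fun _ => ({-1, 0, 1} : Finset ℝ) |
    σ ∈ depPatterns n V ∧ #{i | σ i ≠ 0} = 4}

theorem mem_patterns4 : σ ∈ patterns4 n V ↔ σ ∈ depPatterns n V ∧ #{i | σ i ≠ 0} = 4 := by
  simpa [patterns4] using fun h _ => mem_piFinset_of_mem_depPatterns h

theorem fstar4_eq_card (t : ℕ) : fstar4 n V t = #{σ ∈ patterns4 n V | #{i | σ i < 0} = t} := by
  rw [fstar4, ← Set.ncard_coe_finset]
  congr 1
  ext σ
  simp [mem_patterns4, and_assoc]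

theorem exists_filter_patterns4_support_eq_pair (hV : InGeneralPosition ℝ V) {S : Finset (Fin n)}
    (hS : #S = 4) : ∃ σ₀ : Fin n → ℝ, σ₀ ≠ -σ₀ ∧
      {σ ∈ patterns4 n V | ({i | σ i ≠ 0} : Finset _) = S} = {σ₀, -σ₀} := by
  have hS' : #S = finrank ℝ (Fin 3 → ℝ) + 1 := by simpa using hS
  obtain ⟨l₀, hl₀, hsupp₀⟩ := hV.exists_sum_smul_eq_zero_of_card_eq hS'
  set σ₀ : Fin n → ℝ := fun i => Real.sign (l₀ i)
  have hσ₀S : ({i | σ₀ i ≠ 0} : Finset _) = S := by ext i; simp [σ₀, Real.sign_eq_zero_iff, hsupp₀]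
  have hnegσ₀S : ({i | (-σ₀) i ≠ 0} : Finset _) = S := by simpa using hσ₀S
  have hl₀ne : l₀ ≠ 0 := fun h => by
    obtain ⟨j, hj⟩ := card_pos.mp (hS ▸ four_pos)
    exact (hsupp₀ j).mpr hj (by simp [h])
  have hσ₀ : σ₀ ∈ depPatterns n V := ⟨l₀, hl₀ne, hl₀, rfl⟩
  refine ⟨σ₀, fun h => ?_, ?_⟩
  · simp [← hσ₀S, self_eq_neg.mp h] at hS
  ext σ
  simp only [mem_filter, mem_patterns4, mem_insert, mem_singleton]
  constructor
  · rintro ⟨⟨⟨l, hl, hlV, rfl⟩, -⟩, hsupp⟩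
    obtain ⟨c, rfl⟩ := hV.eq_smul_of_support_subset hS' hl₀ hsupp₀ hlV fun i hi => by
      simpa [Real.sign_eq_zero_iff, ← hsupp] using hi
    rcases Real.sign_apply_eq_of_ne_zero c (by rintro rfl; simp at hl) with hc | hc
    · right; ext i; simp [Real.sign_mul, hc, σ₀]
    · left; ext i; simp [Real.sign_mul, hc, σ₀]
  · rintro (rfl | rfl)
    · exact ⟨⟨hσ₀, hσ₀S ▸ hS⟩, hσ₀S⟩
    · exact ⟨⟨neg_mem_depPatterns hσ₀, hnegσ₀S ▸ hS⟩, hnegσ₀S⟩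

end Patterns

def weight4 (t : ℕ) : ℚ := if t < 2 then 1 else if t = 2 then 1 / 2 else 0

theorem weight4_add_weight4_four_sub {t : ℕ} (ht : t ≤ 4) : weight4 t + weight4 (4 - t) = 1 := by
  interval_cases t <;> norm_num [weight4]

theorem sum_weight4_filter_support_eq {n : ℕ} {V : Fin n → Fin 3 → ℝ}
    (hV : InGeneralPosition ℝ V) {S : Finset (Fin n)} (hS : #S = 4) :
    ∑ σ ∈ patterns4 n V with ({i | σ i ≠ 0} : Finset _) = S, weight4 #{i | σ i < 0} = 1 := by
  obtain ⟨σ₀, hne, hfiber⟩ := exists_filter_patterns4_support_eq_pair hV hS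
  have hσ₀ : σ₀ ∈ {σ ∈ patterns4 n V | ({i | σ i ≠ 0} : Finset _) = S} :=
    hfiber ▸ mem_insert_self _ _
  have hcard := card_filter_lt_zero_add_card_filter_neg_lt_zero σ₀
  rw [(mem_filter.mp hσ₀).2, hS] at hcard
  rw [hfiber, sum_pair hne, ← weight4_add_weight4_four_sub (t := #{i | σ₀ i < 0}) (by omega)]
  congr 2
  omega

theorem stmt_6_general (n : ℕ) (V : Fin n → (Fin 3 → ℝ))
    (hgen : ∀ s : Finset (Fin n), s.card = 3 →
      LinearIndependent ℝ (fun i : s => V i)) :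
    (fstar4 n V 0 : ℚ) + (fstar4 n V 1 : ℚ) + 1/2 * (fstar4 n V 2 : ℚ) =
      (n.choose 4 : ℚ) := by
  have hV : InGeneralPosition ℝ V := fun s hs => hgen s (by simpa using hs)
  have hneg : ∀ σ ∈ patterns4 n V, #{i | σ i < 0} ∈ range 5 := fun σ hσ => by
    have := card_filter_lt_zero_add_card_filter_neg_lt_zero σ
    rw [(mem_patterns4.mp hσ).2] at this
    exact mem_range.mpr (by omega)
  have hsupp : ∀ σ ∈ patterns4 n V, ({i | σ i ≠ 0} : Finset _) ∈ powersetCard 4 univ :=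
    fun σ hσ => mem_powersetCard_univ.mpr (mem_patterns4.mp hσ).2
  calc (fstar4 n V 0 : ℚ) + (fstar4 n V 1 : ℚ) + 1/2 * (fstar4 n V 2 : ℚ)
      = ∑ t ∈ range 5, weight4 t * fstar4 n V t := by
        simp [sum_range_succ, weight4]
    _ = ∑ σ ∈ patterns4 n V, weight4 #{i | σ i < 0} := by
        rw [← sum_fiberwise_of_maps_to hneg]
        refine sum_congr rfl fun t _ => ?_
        rw [sum_congr rfl fun σ hσ => congrArg weight4 (mem_filter.mp hσ).2, fstar4_eq_card]
        simp [mul_comm]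
    _ = ∑ S ∈ powersetCard 4 univ,
          ∑ σ ∈ patterns4 n V with ({i | σ i ≠ 0} : Finset _) = S, weight4 #{i | σ i < 0} :=
        (sum_fiberwise_of_maps_to hsupp _).symm
    _ = n.choose 4 := by
        rw [sum_congr rfl fun S hS => sum_weight4_filter_support_eq hV (mem_powersetCard.mp hS).2]
        simp

theorem stmt_6 (n : ℕ) (hn : 4 ≤ n) (V : Fin n → (Fin 3 → ℝ))
    (hgen : ∀ s : Finset (Fin n), s.card = 3 →
      LinearIndependent ℝ (fun i : s => V i)) :
    (fstar4 n V 0 : ℚ) + (fstar4 n V 1 : ℚ) + 1/2 * (fstar4 n V 2 : ℚ) =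
      (n.choose 4 : ℚ) :=
  stmt_6_general n V hgen
end

section
/- Let u_1, u_2, u_3, u_4 be four vectors in R^3, every three of which are linearly independent. Then exactly one of the following holds: (Type 0) 0 is in the interior of the convex hull of {u_1,...,u_4}; (Type 1) one of the four vectors lies in the interior of the cone positively spanned by the other three; (Type 2) the positive cone spanned by the four vectors is pointed (contained in an open halfspace through the origin) and has all four vectors on extremal rays. -/
/-!
In general position the linear relations `∑ l i • u i = 0` form a line, and every nonzero
relation has all `l i ≠ 0`: a relation vanishing at `i` is one among the three other vectors.
The type is read off the signs of `l`. All signs equal: type 0. Exactly one sign differs from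
the others: type 1, with the odd vector in the cone of the rest. Two against two: type 2. Each
membership is translated into signs through uniqueness of the relation, a positive functional
exists iff `0` is not in the convex hull (separation), and interiors come for free because
`α ↦ ∑ α i • u i` is an open map and `α` may be moved along `l` without changing its image.
-/

def posCone (u : Fin 4 → (Fin 3 → ℝ)) (s : Finset (Fin 4)) : Set (Fin 3 → ℝ) :=
  {x | ∃ α : Fin 4 → ℝ, (∀ j, 0 ≤ α j) ∧ (∀ j ∉ s, α j = 0) ∧ x = ∑ j, α j • u j}

open Finset Module

section Dependency

variable {K ι V : Type*} [Field K] [Fintype ι] [AddCommGroup V] [Module K V] {u : ι → V}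

theorem exists_sum_smul_eq_zero_of_finrank_lt [FiniteDimensional K V]
    (h : finrank K V < Fintype.card ι) : ∃ l : ι → K, ∑ j, l j • u j = 0 ∧ l ≠ 0 := by
  have hdep : ¬LinearIndependent K u := fun hu => h.not_ge hu.fintype_card_le_finrank
  obtain ⟨l, hl, i, hi⟩ := Fintype.not_linearIndependent_iff.mp hdep
  exact ⟨l, hl, fun h0 => hi (congrFun h0 i)⟩

variable [DecidableEq ι]

theorem eq_zero_of_sum_smul_eq_zero_of_apply_eq_zero {i : ι}
    (hu : LinearIndependent K fun j : ↥(univ.erase i) => u j) {μ : ι → K}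
    (hμ : ∑ j, μ j • u j = 0) (hi : μ i = 0) : μ = 0 := by
  have hsum : ∑ j : ↥(univ.erase i), μ j • u j = 0 := by
    rw [sum_coe_sort (univ.erase i) (fun j => μ j • u j), sum_erase univ (by simp [hi]), hμ]
  funext j
  obtain rfl | hj := eq_or_ne j i
  · exact hi
  · exact Fintype.linearIndependent_iff.mp hu (fun j => μ j) hsum ⟨j, by simpa using hj⟩

theorem apply_ne_zero_of_sum_smul_eq_zero
    (hu : ∀ i : ι, LinearIndependent K fun j : ↥(univ.erase i) => u j) {l : ι → K}
    (hl : ∑ j, l j • u j = 0) (hl0 : l ≠ 0) (i : ι) : l i ≠ 0 :=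
  fun hi => hl0 (eq_zero_of_sum_smul_eq_zero_of_apply_eq_zero (hu i) hl hi)

theorem eq_smul_of_sum_smul_eq_zero {i : ι}
    (hu : LinearIndependent K fun j : ↥(univ.erase i) => u j) {l μ : ι → K}
    (hl : ∑ j, l j • u j = 0) (hli : l i ≠ 0) (hμ : ∑ j, μ j • u j = 0) :
    μ = (μ i / l i) • l := by
  refine sub_eq_zero.mp (eq_zero_of_sum_smul_eq_zero_of_apply_eq_zero hu ?_ ?_)
  · simp only [Pi.sub_apply, Pi.smul_apply, smul_eq_mul, sub_smul, mul_smul, sum_sub_distrib,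
      ← smul_sum, hμ, hl, smul_zero, sub_zero]
  · simp [hli]

theorem span_range_eq_top_of_linearIndependent_erase [FiniteDimensional K V] {i : ι}
    (hu : LinearIndependent K fun j : ↥(univ.erase i) => u j)
    (hcard : Fintype.card ι = finrank K V + 1) : Submodule.span K (Set.range u) = ⊤ := by
  refine eq_top_mono (Submodule.span_mono ?_) (hu.span_eq_top_of_card_eq_finrank' (by simp [hcard]))
  exact Set.range_comp_subset_range Subtype.val u

end Dependency

theorem convexHull_range_eq_image_stdSimplex {ι V : Type*} [Fintype ι] [AddCommGroup V]
    [Module ℝ V] (u : ι → V) :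
    convexHull ℝ (Set.range u) = Fintype.linearCombination ℝ u '' stdSimplex ℝ ι := by
  classical
  rw [← convexHull_rangle_single_eq_stdSimplex, LinearMap.image_convexHull, ← Set.range_comp]
  congr
  ext i
  simp

theorem mul_pos_of_zero_mem_convexHull {ι V : Type*} [Fintype ι] [DecidableEq ι] [AddCommGroup V]
    [Module ℝ V] {u : ι → V} (hu : ∀ i : ι, LinearIndependent ℝ fun j : ↥(univ.erase i) => u j)
    {l : ι → ℝ} (hl : ∑ j, l j • u j = 0) (hl0 : ∀ j, l j ≠ 0)
    (h0 : (0 : V) ∈ convexHull ℝ (Set.range u)) (j k : ι) : 0 < l j * l k := by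
  rw [convexHull_range_eq_image_stdSimplex] at h0
  obtain ⟨w, ⟨hw0, hw1⟩, hw⟩ := h0
  have hwl := eq_smul_of_sum_smul_eq_zero (hu j) hl (hl0 j) hw
  set c := w j / l j
  have hc : c ≠ 0 := by
    rintro hc
    rw [hc, zero_smul] at hwl
    simp [hwl] at hw1
  have hw_pos : ∀ m, 0 < w m := fun m =>
    (hw0 m).lt_of_ne' (by rw [hwl]; exact mul_ne_zero hc (hl0 m))
  have hww : w j * w k = c ^ 2 * (l j * l k) := by
    rw [hwl]
    simp only [Pi.smul_apply, smul_eq_mul]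
    ring
  exact pos_of_mul_pos_right (hww ▸ mul_pos (hw_pos j) (hw_pos k)) (sq_nonneg c)

theorem exists_forall_sum_mul_pos_iff_zero_notMem_convexHull {ι κ : Type*} [Fintype ι]
    [Fintype κ] (u : ι → κ → ℝ) :
    (∃ f : κ → ℝ, ∀ i, 0 < ∑ t, f t * u i t) ↔ (0 : κ → ℝ) ∉ convexHull ℝ (Set.range u) := by
  classical
  constructor
  · rintro ⟨f, hf⟩ h0
    have hhalf : convexHull ℝ (Set.range u) ⊆ {x | 0 < f ⬝ᵥ x} :=
      convexHull_min (Set.range_subset_iff.mpr hf)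
        (convex_halfSpace_gt (𝕜 := ℝ) ⟨dotProduct_add f, fun c x => dotProduct_smul c f x⟩ 0)
    simpa using hhalf h0
  · intro h0
    obtain ⟨φ, c, hφ0, hφ⟩ := geometric_hahn_banach_point_closed (convex_convexHull ℝ _)
      ((Set.finite_range u).isClosed_convexHull ℝ) h0
    refine ⟨fun t => φ fun j => if t = j then 1 else 0, fun i => ?_⟩
    have hφi : φ (u i) = ∑ t, (φ fun j => if t = j then 1 else 0) * u i t := by
      simp_rw [mul_comm _ (u i _)]
      exact LinearMap.pi_apply_eq_sum_univ (φ : (κ → ℝ) →ₗ[ℝ] ℝ) (u i)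
    rw [← hφi]
    exact ((map_zero φ).symm.trans_lt hφ0).trans (hφ _ (subset_convexHull ℝ _ ⟨i, rfl⟩))

section Interior

variable {ι V : Type*} [Fintype ι] [NormedAddCommGroup V] [NormedSpace ℝ V]
  [FiniteDimensional ℝ V] {u : ι → V}

theorem isOpenMap_linearCombination (hspan : Submodule.span ℝ (Set.range u) = ⊤) :
    IsOpenMap (Fintype.linearCombination ℝ u) :=
  LinearMap.isOpenMap_of_finiteDimensional _ <| LinearMap.range_eq_top.mp <| by
    rw [Fintype.range_linearCombination, hspan]

theorem sum_smul_mem_interior_of_shift (hspan : Submodule.span ℝ (Set.range u) = ⊤)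
    {l : ι → ℝ} (hl : ∑ j, l j • u j = 0) {c : (ι → ℝ) → ℝ} (hc : Continuous c) (S : Set ι)
    {K : Set V} (hK : ∀ α, (∀ j ∈ S, 0 < α j + c α * l j) → ∑ j, (α j + c α * l j) • u j ∈ K)
    {α₀ : ι → ℝ} (hα₀ : ∀ j ∈ S, 0 < α₀ j + c α₀ * l j) : ∑ j, α₀ j • u j ∈ interior K := by
  set A := Fintype.linearCombination ℝ u
  have hshift : ∀ α, ∑ j, (α j + c α * l j) • u j = A α := fun α => by
    simp only [add_smul, mul_smul, sum_add_distrib, ← smul_sum, hl, smul_zero, add_zero]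
    rfl
  have hW : IsOpen {α : ι → ℝ | ∀ j ∈ S, 0 < α j + c α * l j} :=
    (isOpen_set_pi S.toFinite fun _ _ => isOpen_Ioi).preimage
      (show Continuous fun α => α + c α • l by fun_prop)
  refine interior_maximal ?_ (isOpenMap_linearCombination hspan _ hW) ⟨α₀, hα₀, rfl⟩
  rintro _ ⟨α, hα, rfl⟩
  rw [← hshift]
  exact hK α hα

theorem zero_mem_interior_convexHull [Nonempty ι] (hspan : Submodule.span ℝ (Set.range u) = ⊤)
    {l : ι → ℝ} (hl : ∑ j, l j • u j = 0) (hpos : ∀ j k, 0 < l j * l k) :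
    (0 : V) ∈ interior (convexHull ℝ (Set.range u)) := by
  set s := ∑ j, l j
  have hls : ∀ j, 0 < l j * s := fun j => by
    rw [mul_sum]
    exact sum_pos (fun k _ => hpos j k) univ_nonempty
  have hs : s ≠ 0 := right_ne_zero_of_mul (hls (Classical.arbitrary ι)).ne'
  have h := sum_smul_mem_interior_of_shift hspan hl (c := fun α => (1 - ∑ j, α j) / s)
    (by fun_prop) Set.univ (K := convexHull ℝ (Set.range u)) (α₀ := 0) ?_ ?_
  · simpa using h
  · intro α hα
    rw [convexHull_range_eq_image_stdSimplex]
    refine ⟨_, ⟨fun j => (hα j trivial).le, ?_⟩, rfl⟩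
    rw [sum_add_distrib, ← mul_sum, div_mul_cancel₀ _ hs]
    ring
  · intro j _
    simpa [div_eq_inv_mul] using div_pos_iff.mpr (mul_pos_iff.mp (hls j))

end Interior

section PosCone

variable {u : Fin 4 → Fin 3 → ℝ} {l : Fin 4 → ℝ} {i : Fin 4}

theorem mul_neg_of_mem_posCone_erase
    (hu : LinearIndependent ℝ fun j : ↥(univ.erase i) => u j) (hl : ∑ j, l j • u j = 0)
    (hl0 : ∀ j, l j ≠ 0) (h : u i ∈ posCone u (univ.erase i)) (j : Fin 4) (hj : j ≠ i) :
    l j * l i < 0 := by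
  obtain ⟨α, hα0, hαs, hα⟩ := h
  have hαi : α i = 0 := hαs i (by simp)
  have hrel : ∑ m, (α - Pi.single i 1 : Fin 4 → ℝ) m • u m = 0 := by
    simp [sub_smul, sum_sub_distrib, ← hα, Pi.single_apply]
  obtain ⟨c, hμ⟩ : ∃ c, (α - Pi.single i 1 : Fin 4 → ℝ) = c • l :=
    ⟨_, eq_smul_of_sum_smul_eq_zero hu hl (hl0 i) hrel⟩
  have hci : c * l i = -1 := by simpa [hαi] using (congrFun hμ i).symm
  have hcj : c * l j = α j := by simpa [hj] using (congrFun hμ j).symm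
  have hαj : 0 < α j := (hα0 j).lt_of_ne' <| hcj ▸
    mul_ne_zero (left_ne_zero_of_mul (by rw [hci]; norm_num)) (hl0 j)
  have hsq : l j * l i * c ^ 2 = -α j := by linear_combination (c * l i) * hcj + α j * hci
  exact neg_of_mul_neg_left (hsq ▸ neg_neg_of_pos hαj) (sq_nonneg c)

theorem mem_interior_posCone_erase (hspan : Submodule.span ℝ (Set.range u) = ⊤)
    (hl : ∑ j, l j • u j = 0) (hli : l i ≠ 0) (h : ∀ j ≠ i, l j * l i < 0) :
    u i ∈ interior (posCone u (univ.erase i)) := by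
  have hint := sum_smul_mem_interior_of_shift hspan hl (c := fun α => -(α i / l i))
    (by fun_prop) {i}ᶜ (K := posCone u (univ.erase i)) (α₀ := Pi.single i 1) ?_ ?_
  · simpa [Pi.single_apply] using hint
  · intro α hα
    refine ⟨_, fun j => ?_, fun j hj => ?_, rfl⟩
    · obtain rfl | hj := eq_or_ne j i
      · simp [hli]
      · exact (hα j hj).le
    · obtain rfl : j = i := by simpa using hj
      simp [hli]
  · intro j hj
    rw [Set.mem_compl_singleton_iff] at hj
    simpa [Pi.single_apply, hj, div_eq_inv_mul] using div_neg_iff.mpr (mul_neg_iff.mp (h j hj))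

theorem mem_posCone_erase_iff (hu : LinearIndependent ℝ fun j : ↥(univ.erase i) => u j)
    (hspan : Submodule.span ℝ (Set.range u) = ⊤) (hl : ∑ j, l j • u j = 0)
    (hl0 : ∀ j, l j ≠ 0) : u i ∈ posCone u (univ.erase i) ↔ ∀ j ≠ i, l j * l i < 0 :=
  ⟨mul_neg_of_mem_posCone_erase hu hl hl0,
    fun h => interior_subset (mem_interior_posCone_erase hspan hl (hl0 i) h)⟩

end PosCone

theorem stmt_7 (u : Fin 4 → (Fin 3 → ℝ))
    (hgen : ∀ s : Finset (Fin 4), s.card = 3 →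
      LinearIndependent ℝ (fun i : s => u i)) :
    let T0 : Prop := (0 : Fin 3 → ℝ) ∈ interior (convexHull ℝ (Set.range u))
    let T1 : Prop := ∃ i, u i ∈ interior (posCone u (Finset.univ.erase i))
    let T2 : Prop := (∃ f : Fin 3 → ℝ, ∀ i, 0 < ∑ t, f t * u i t) ∧
      ∀ i, u i ∉ posCone u (Finset.univ.erase i)
    (T0 ∧ ¬T1 ∧ ¬T2) ∨ (¬T0 ∧ T1 ∧ ¬T2) ∨ (¬T0 ∧ ¬T1 ∧ T2) := by
  intro T0 T1 T2
  have hind : ∀ i : Fin 4, LinearIndependent ℝ fun j : ↥(univ.erase i) => u j :=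
    fun i => hgen _ (by simp)
  have hspan := span_range_eq_top_of_linearIndependent_erase (hind 0) (by simp)
  obtain ⟨l, hl, hl0⟩ := exists_sum_smul_eq_zero_of_finrank_lt (K := ℝ) (u := u) (by simp)
  have hsupp := apply_ne_zero_of_sum_smul_eq_zero hind hl hl0
  have hhull : (0 : Fin 3 → ℝ) ∈ convexHull ℝ (Set.range u) ↔ ∀ j k, 0 < l j * l k :=
    ⟨mul_pos_of_zero_mem_convexHull hind hl hsupp,
      fun h => interior_subset (zero_mem_interior_convexHull hspan hl h)⟩
  have hT0 : T0 ↔ ∀ j k, 0 < l j * l k :=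
    ⟨fun h => hhull.mp (interior_subset h), zero_mem_interior_convexHull hspan hl⟩
  have hT1 : T1 ↔ ∃ i, ∀ j ≠ i, l j * l i < 0 := exists_congr fun i =>
    ⟨fun h => (mem_posCone_erase_iff (hind i) hspan hl hsupp).mp (interior_subset h),
      mem_interior_posCone_erase hspan hl (hsupp i)⟩
  have hT2 : T2 ↔ ¬(∀ j k, 0 < l j * l k) ∧ ¬∃ i, ∀ j ≠ i, l j * l i < 0 := by
    refine and_congr ((exists_forall_sum_mul_pos_iff_zero_notMem_convexHull u).trans
      (not_congr hhull)) ?_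
    simp only [not_exists, mem_posCone_erase_iff (hind _) hspan hl hsupp]
  have hexcl : (∀ j k, 0 < l j * l k) → ¬∃ i, ∀ j ≠ i, l j * l i < 0 := by
    rintro hpos ⟨i, hi⟩
    obtain ⟨j, hj⟩ := exists_ne i
    exact (hpos j i).not_gt (hi j hj)
  by_cases hS : ∀ j k, 0 < l j * l k
  · exact .inl ⟨hT0.mpr hS, fun h => hexcl hS (hT1.mp h), fun h => (hT2.mp h).1 hS⟩
  by_cases hO : ∃ i, ∀ j ≠ i, l j * l i < 0
  · exact .inr (.inl ⟨mt hT0.mp hS, hT1.mpr hO, fun h => (hT2.mp h).2 hO⟩)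
  · exact .inr (.inr ⟨mt hT0.mp hS, mt hT1.mp hO, hT2.mpr ⟨hS, hO⟩⟩)
end

section
/- Let n ≥ 3 and let j, k be integers with 0 ≤ j ≤ 3 and 0 ≤ k ≤ n-3. Define the polynomials P(x,y) = (y^k - y^{n-3-k}) * ((x+1)^{3-j}(x+y)^j - (x+1)^j(x+y)^{3-j}) and Q(x,y) = (y^j - y^{3-j}) * ((x+1)^k(x+y)^{n-3-k} - (x+1)^{n-3-k}(x+y)^k). Then Q(x,y) = -(x+1)^n * P(-x/(x+1), (x+y)/(x+1)); that is, substituting x ↦ -x/(x+1), y ↦ (x+y)/(x+1) into P and multiplying by -(x+1)^n yields Q. -/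
theorem stmt_8 (n j k : ℕ) (hn : 3 ≤ n) (hj : j ≤ 3) (hk : k ≤ n - 3)
    (P Q : ℚ → ℚ → ℚ)
    (hP : ∀ x y : ℚ, P x y =
      (y^k - y^(n-3-k)) * ((x+1)^(3-j) * (x+y)^j - (x+1)^j * (x+y)^(3-j)))
    (hQ : ∀ x y : ℚ, Q x y =
      (y^j - y^(3-j)) * ((x+1)^k * (x+y)^(n-3-k) - (x+1)^(n-3-k) * (x+y)^k)) :
    ∀ x y : ℚ, x + 1 ≠ 0 →
      Q x y = -(x+1)^n * P (-x/(x+1)) ((x+y)/(x+1)) := by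
  intro x y hx
  obtain ⟨m, rfl⟩ : ∃ m, n = m + k + 3 := ⟨n - 3 - k, by omega⟩
  have h1 : m + k + 3 - 3 - k = m := by omega
  rw [hP, hQ, h1]
  interval_cases j <;> (norm_num [div_pow]; field_simp; ring)
end

section
/- Let μ be a probability distribution on R^3 that is centrally symmetric (invariant under x ↦ -x) and non-degenerate (every plane through the origin has μ-measure zero). If w_1, w_2, w_3, w_4 are independent μ-random vectors, then the probability that 0 lies in the interior of the convex hull of {w_1,w_2,w_3,w_4} equals 1/8. -/
/-!
Each sign flip `w ↦ (±w₀, …, ±w_d)` preserves the law of `d + 1` independent `μ`-vectors,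
so the probability is the average, over the `2 ^ (d + 1)` flips, of the probability that the
flipped configuration captures the origin. Almost surely any `d` of the vectors are linearly
independent; then their linear relations form a line spanned by some `c` with all `cᵢ ≠ 0`, and
`0` is interior to the hull of `(sᵢ wᵢ)` iff these vectors have a relation with positive
coefficients, i.e. iff all `cᵢ sᵢ` have the same sign, i.e. iff `s = ± sign c`. Exactly two
flips succeed, whence the probability `2 / 2 ^ (d + 1)`.
-/

open MeasureTheory Set Module Filter Topology
open scoped ENNReal

section ConvexGeometry

variable {ι E : Type*} [Fintype ι] [AddCommGroup E] [Module ℝ E]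

theorem convexHull_range_eq_image_stdSimplex_s12 (w : ι → E) :
    convexHull ℝ (range w) = Fintype.linearCombination ℝ w '' stdSimplex ℝ ι := by
  classical
  rw [← convexHull_rangle_single_eq_stdSimplex, LinearMap.image_convexHull, ← range_comp]
  congr with i
  simp

def HasPositiveRelation (w : ι → E) : Prop :=
  ∃ c : ι → ℝ, (∀ i, 0 < c i) ∧ ∑ i, c i • w i = 0

theorem HasPositiveRelation.of_zero_mem_interior_convexHull [TopologicalSpace E]
    [ContinuousSMul ℝ E] {w : ι → E} (h : (0 : E) ∈ interior (convexHull ℝ (range w))) :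
    HasPositiveRelation w := by
  have hlim : Tendsto (fun t : ℝ => -t • ∑ i, w i) (𝓝[>] 0) (𝓝 0) :=
    tendsto_nhdsWithin_of_tendsto_nhds <|
      (continuous_neg.smul continuous_const).tendsto' 0 0 (by simp)
  obtain ⟨t, hmem, ht⟩ :=
    ((hlim.eventually (mem_interior_iff_mem_nhds.mp h)).and self_mem_nhdsWithin).exists
  obtain ⟨a, ⟨ha, -⟩, hax⟩ := convexHull_range_eq_image_stdSimplex_s12 w ▸ hmem
  refine ⟨a + fun _ => t, fun i => add_pos_of_nonneg_of_pos (ha i) ht, ?_⟩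
  rw [Fintype.linearCombination_apply] at hax
  simp [add_smul, Finset.sum_add_distrib, hax, ← Finset.smul_sum]

theorem HasPositiveRelation.zero_mem_interior_convexHull [Nonempty ι] [TopologicalSpace E]
    [IsTopologicalAddGroup E] [ContinuousSMul ℝ E] [T2Space E] [FiniteDimensional ℝ E] {w : ι → E}
    (hw : HasPositiveRelation w) (hspan : Submodule.span ℝ (range w) = ⊤) :
    (0 : E) ∈ interior (convexHull ℝ (range w)) := by
  obtain ⟨c, hc, hcw⟩ := hw
  have hL : Function.Surjective (Fintype.linearCombination ℝ w) := by
    rw [← LinearMap.range_eq_top, Fintype.range_linearCombination, hspan]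
  have hLc : Fintype.linearCombination ℝ w c = 0 := by rwa [Fintype.linearCombination_apply]
  have hsc : 0 < ∑ i, c i := Finset.sum_pos (fun i _ => hc i) Finset.univ_nonempty
  set U : Set (ι → ℝ) := {a | (∀ i, 0 < a i) ∧ ∑ i, a i < 1}
  have hU : IsOpen U := by
    simp only [U, ofPred_and, ofPred_forall]
    refine (isOpen_iInter_of_finite fun i : ι => ?_).inter ?_
    · exact isOpen_lt continuous_const (continuous_apply i)
    · exact isOpen_lt (continuous_finsetSum _ fun i _ => continuous_apply i) continuous_const
  -- adding a multiple of `c` does not move the image, and brings `a ∈ U` into the simplex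
  have hUsub : Fintype.linearCombination ℝ w '' U ⊆ convexHull ℝ (range w) := by
    rintro _ ⟨a, ⟨ha, ha1⟩, rfl⟩
    rw [convexHull_range_eq_image_stdSimplex_s12]
    refine ⟨a + ((1 - ∑ i, a i) / ∑ i, c i) • c, ⟨fun i => ?_, ?_⟩, ?_⟩
    · exact add_nonneg (ha i).le (mul_nonneg (div_nonneg (by linarith) hsc.le) (hc i).le)
    · simp [Finset.sum_add_distrib, ← Finset.mul_sum, hsc.ne']
    · simp [hLc]
  have h0 : (0 : E) ∈ Fintype.linearCombination ℝ w '' U := by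
    refine ⟨(2 * ∑ i, c i)⁻¹ • c, ⟨fun i => by simp [hc i, hsc], ?_⟩, by simp [hLc]⟩
    simp only [Pi.smul_apply, smul_eq_mul, ← Finset.mul_sum]
    rw [mul_inv_rev, mul_right_comm, inv_mul_cancel₀ hsc.ne']
    norm_num
  exact interior_maximal hUsub
    ((Fintype.linearCombination ℝ w).isOpenMap_of_finiteDimensional hL U hU) h0

theorem zero_mem_interior_convexHull_iff [Nonempty ι] [TopologicalSpace E]
    [IsTopologicalAddGroup E] [ContinuousSMul ℝ E] [T2Space E] [FiniteDimensional ℝ E]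
    {w : ι → E} (hspan : Submodule.span ℝ (range w) = ⊤) :
    (0 : E) ∈ interior (convexHull ℝ (range w)) ↔ HasPositiveRelation w :=
  ⟨.of_zero_mem_interior_convexHull, fun h => h.zero_mem_interior_convexHull hspan⟩

theorem isClosed_setOf_exists_mem_sum_smul_eq_zero [TopologicalSpace E] [ContinuousAdd E]
    [ContinuousSMul ℝ E] [T1Space E] {K : Set (ι → ℝ)} (hK : IsCompact K) :
    IsClosed {w : ι → E | ∃ c ∈ K, ∑ i, c i • w i = 0} := by
  have := isCompact_iff_compactSpace.mp hK
  have hF : IsClosed {p : (ι → E) × K | ∑ i, (p.2 : ι → ℝ) i • p.1 i = 0} :=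
    isClosed_singleton.preimage (continuous_finsetSum _ fun i _ => ((continuous_apply i).comp
      (continuous_subtype_val.comp continuous_snd)).smul ((continuous_apply i).comp continuous_fst))
  convert isClosedMap_fst_of_compactSpace _ hF using 1
  ext w
  simp

theorem measurableSet_setOf_hasPositiveRelation [TopologicalSpace E] [ContinuousAdd E]
    [ContinuousSMul ℝ E] [T1Space E] [SecondCountableTopology E] [MeasurableSpace E]
    [BorelSpace E] :
    MeasurableSet {w : ι → E | HasPositiveRelation w} := by
  have hcover : {w : ι → E | HasPositiveRelation w} =
      ⋃ n : ℕ, {w | ∃ c ∈ univ.pi fun _ => Icc ((n : ℝ) + 1)⁻¹ (n + 1), ∑ i, c i • w i = 0} := by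
    ext w
    simp only [HasPositiveRelation, mem_ofPred_eq, mem_iUnion, mem_univ_pi, mem_Icc]
    constructor
    · rintro ⟨c, hc, hcw⟩
      obtain ⟨n, hn⟩ := exists_nat_gt (∑ i, (c i + (c i)⁻¹))
      have hci (i : ι) : c i + (c i)⁻¹ < n + 1 := by
        have := Finset.single_le_sum (f := fun j => c j + (c j)⁻¹)
          (fun j _ => add_nonneg (hc j).le (inv_nonneg.mpr (hc j).le)) (Finset.mem_univ i)
        linarith
      refine ⟨n, c, fun i => ⟨inv_le_of_inv_le₀ (hc i) ?_, ?_⟩, hcw⟩ <;>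
        linarith [hci i, hc i, inv_pos.mpr (hc i)]
    · rintro ⟨n, c, hc, hcw⟩
      exact ⟨c, fun i => lt_of_lt_of_le (by positivity) (hc i).1, hcw⟩
  rw [hcover]
  exact MeasurableSet.iUnion fun n => (isClosed_setOf_exists_mem_sum_smul_eq_zero
    (isCompact_univ_pi fun _ => isCompact_Icc)).measurableSet

end ConvexGeometry

section GeneralPosition

variable {E : Type*} [AddCommGroup E] [Module ℝ E] [FiniteDimensional ℝ E] {d : ℕ}
  {w : Fin (d + 1) → E}

theorem span_range_eq_top_of_linearIndependent_comp_succAbove (hd : finrank ℝ E = d)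
    {i : Fin (d + 1)} (hw : LinearIndependent ℝ (w ∘ i.succAbove)) :
    Submodule.span ℝ (range w) = ⊤ :=
  eq_top_mono (Submodule.span_mono (range_comp_subset_range _ _))
    (hw.span_eq_top_of_card_eq_finrank' (by simp [hd]))

theorem exists_relation_of_linearIndependent_comp_succAbove (hd : finrank ℝ E = d)
    (hw : ∀ i : Fin (d + 1), LinearIndependent ℝ (w ∘ i.succAbove)) :
    ∃ c : Fin (d + 1) → ℝ, (∀ i, c i ≠ 0) ∧
      ∀ e : Fin (d + 1) → ℝ, ∑ i, e i • w i = 0 ↔ ∃ t : ℝ, t • c = e := by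
  set L := Fintype.linearCombination ℝ w
  have hker : finrank ℝ (LinearMap.ker L) = 1 := by
    have := L.finrank_range_add_finrank_ker
    rw [Fintype.range_linearCombination,
      span_range_eq_top_of_linearIndependent_comp_succAbove hd (hw 0), finrank_top, hd,
      finrank_fin_fun] at this
    omega
  obtain ⟨⟨c, hc⟩, hc0, hgen⟩ := finrank_eq_one_iff'.mp hker
  have hc : ∑ i, c i • w i = 0 := by rwa [← Fintype.linearCombination_apply]
  refine ⟨c, fun i hci => hc0 ?_, fun e => ⟨fun he => ?_, ?_⟩⟩
  · have hsucc : c ∘ i.succAbove = 0 := by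
      refine funext <| Fintype.linearIndependent_iff.mp (hw i) _ ?_
      simpa [Fin.sum_univ_succAbove _ i, hci] using hc
    ext j
    cases j using Fin.succAboveCases i with
    | x => exact hci
    | p j => exact congrFun hsucc j
  · obtain ⟨t, ht⟩ := hgen ⟨e, by rwa [LinearMap.mem_ker, Fintype.linearCombination_apply]⟩
    exact ⟨t, congrArg Subtype.val ht⟩
  · rintro ⟨t, rfl⟩
    simp only [Pi.smul_apply, smul_eq_mul, mul_smul, ← Finset.smul_sum, hc, smul_zero]

end GeneralPosition

theorem units_eq_ite_pos_iff {r : ℝ} (hr : r ≠ 0) (u : ℤˣ) :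
    u = (if 0 < r then 1 else -1) ↔ 0 < r * ((u : ℤ) : ℝ) := by
  rcases Int.units_eq_one_or u with rfl | rfl <;> rcases hr.lt_or_gt with h | h <;>
    simp [h, not_lt.mpr h.le, units_ne_neg_self, neg_units_ne_self]

section Signs

variable {ι E : Type*} [Fintype ι] [AddCommGroup E] [Module ℝ E] {w : ι → E} {c : ι → ℝ}

theorem hasPositiveRelation_units_smul_iff_exists
    (hrel : ∀ e : ι → ℝ, ∑ i, e i • w i = 0 ↔ ∃ t : ℝ, t • c = e) (s : ι → ℤˣ) :
    HasPositiveRelation (s • w) ↔ ∃ t : ℝ, ∀ i, 0 < t * c i * (s i : ℤ) := by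
  have hsq (i : ι) : ((s i : ℤ) : ℝ) * (s i : ℤ) = 1 := by
    rw [← Int.cast_mul, ← Units.val_mul, Int.units_mul_self, Units.val_one, Int.cast_one]
  have hsmul (a : ι → ℝ) : ∑ i, a i • (s • w) i = ∑ i, (a i * (s i : ℤ)) • w i := by
    simp [Units.smul_def, mul_smul, Int.cast_smul_eq_zsmul]
  constructor
  · rintro ⟨a, ha, haw⟩
    obtain ⟨t, ht⟩ := (hrel _).mp ((hsmul a).symm.trans haw)
    refine ⟨t, fun i => ?_⟩
    have := congrFun ht i
    simp only [Pi.smul_apply, smul_eq_mul] at this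
    rw [this, mul_assoc, hsq, mul_one]
    exact ha i
  · rintro ⟨t, ht⟩
    refine ⟨fun i => t * c i * (s i : ℤ), ht, (hsmul _).trans ((hrel _).mpr ⟨t, ?_⟩)⟩
    ext i
    simp [mul_assoc, hsq]

theorem hasPositiveRelation_units_smul_iff [Nonempty ι] (hc : ∀ i, c i ≠ 0)
    (hrel : ∀ e : ι → ℝ, ∑ i, e i • w i = 0 ↔ ∃ t : ℝ, t • c = e) (s : ι → ℤˣ) :
    HasPositiveRelation (s • w) ↔
      s = (fun i => if 0 < c i then 1 else -1) ∨ s = -fun i => if 0 < c i then 1 else -1 := by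
  rw [hasPositiveRelation_units_smul_iff_exists hrel, funext_iff, funext_iff]
  simp only [Pi.neg_apply, ← neg_eq_iff_eq_neg (a := s _), units_eq_ite_pos_iff (hc _),
    Units.val_neg, Int.cast_neg]
  constructor
  · rintro ⟨t, ht⟩
    obtain ⟨i⟩ := ‹Nonempty ι›
    rcases lt_trichotomy t 0 with h | rfl | h
    · exact .inr fun i => by nlinarith [ht i]
    · simpa using ht i
    · exact .inl fun i => by nlinarith [ht i]
  · rintro (h | h)
    · exact ⟨1, by simpa using h⟩
    · exact ⟨-1, by simpa using h⟩

open Classical in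
theorem card_filter_hasPositiveRelation_units_smul [DecidableEq ι] [Nonempty ι]
    (hc : ∀ i, c i ≠ 0)
    (hrel : ∀ e : ι → ℝ, ∑ i, e i • w i = 0 ↔ ∃ t : ℝ, t • c = e) :
    (Finset.univ.filter fun s : ι → ℤˣ => HasPositiveRelation (s • w)).card = 2 := by
  set σ : ι → ℤˣ := fun i => if 0 < c i then 1 else -1
  have hσ : σ ≠ -σ := fun h => by
    obtain ⟨i⟩ := ‹Nonempty ι›
    exact units_ne_neg_self _ (congrFun h i)
  rw [Finset.filter_congr fun s _ => hasPositiveRelation_units_smul_iff hc hrel s,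
    Finset.filter_or, Finset.filter_eq', Finset.filter_eq', if_pos (Finset.mem_univ _),
    if_pos (Finset.mem_univ _), ← Finset.insert_eq, Finset.card_pair hσ]

end Signs

theorem measurePreserving_units_smul {E : Type*} [AddCommGroup E] [MeasurableSpace E]
    [MeasurableNeg E] {μ : Measure E} [SigmaFinite μ] (hsymm : μ.map Neg.neg = μ)
    {ι : Type*} [Fintype ι] (s : ι → ℤˣ) :
    MeasurePreserving (s • ·) (Measure.pi fun _ : ι => μ) (Measure.pi fun _ : ι => μ) := by
  refine measurePreserving_pi (f := fun i (x : E) => s i • x) _ _ fun i => ?_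
  rcases Int.units_eq_one_or (s i) with h | h <;> simp only [h, one_smul, Units.neg_smul]
  · exact .id μ
  · exact ⟨measurable_neg, hsymm⟩

section Measure

variable {E : Type*} [NormedAddCommGroup E] [NormedSpace ℝ E] [FiniteDimensional ℝ E]
  [MeasurableSpace E] [BorelSpace E] {μ : Measure E}

theorem ae_linearIndependent [SigmaFinite μ] (hμ : ∀ S : Submodule ℝ E, S ≠ ⊤ → μ S = 0) {k : ℕ}
    (hk : k ≤ finrank ℝ E) :
    ∀ᵐ v ∂(Measure.pi fun _ : Fin k => μ), LinearIndependent ℝ v := by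
  induction k with
  | zero => exact ae_of_all _ fun v => linearIndependent_empty_type
  | succ k ih =>
    have hS : MeasurableSet {v : Fin (k + 1) → E | ¬ LinearIndependent ℝ v} :=
      isOpen_setOfPred_linearIndependent.measurableSet.compl
    let e := MeasurableEquiv.piFinSuccAbove (fun _ : Fin (k + 1) => E) 0
    have hmp := (measurePreserving_piFinSuccAbove (fun _ : Fin (k + 1) => μ) 0).symm e
    rw [ae_iff, ← hmp.measure_preimage_equiv, Measure.prod_apply_symm (e.symm.measurable hS)]
    refine (lintegral_congr_ae ((ih (by omega)).mono fun v hv => ?_)).trans lintegral_zero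
    have hslice : (fun a => (a, v)) ⁻¹' (e.symm ⁻¹' {v | ¬ LinearIndependent ℝ v}) =
        Submodule.span ℝ (range v) := by
      ext a
      simp [e, Fin.consEquiv, linearIndependent_finCons, hv]
    refine (congrArg μ hslice).trans (hμ _ fun htop => ?_)
    have := finrank_range_le_card (R := ℝ) v
    rw [Set.finrank, htop, finrank_top, Fintype.card_fin] at this
    omega

theorem ae_linearIndependent_comp_succAbove [IsProbabilityMeasure μ] (hμ : ∀ S : Submodule ℝ E, S ≠ ⊤ → μ S = 0)
    {d : ℕ} (hd : finrank ℝ E = d) :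
    ∀ᵐ w ∂(Measure.pi fun _ : Fin (d + 1) => μ),
      ∀ i : Fin (d + 1), LinearIndependent ℝ (w ∘ i.succAbove) := by
  refine ae_all_iff.mpr fun i => ?_
  have hmp : MeasurePreserving (fun w : Fin (d + 1) → E => w ∘ i.succAbove)
      (Measure.pi fun _ => μ) (Measure.pi fun _ => μ) :=
    measurePreserving_snd.comp (measurePreserving_piFinSuccAbove (fun _ => μ) i)
  exact hmp.quasiMeasurePreserving.ae (ae_linearIndependent hμ hd.ge)

theorem sum_measure_setOf_hasPositiveRelation_units_smul [IsProbabilityMeasure μ]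
    (hμ : ∀ S : Submodule ℝ E, S ≠ ⊤ → μ S = 0) {d : ℕ} (hd : finrank ℝ E = d) :
    ∑ s : Fin (d + 1) → ℤˣ,
      (Measure.pi fun _ => μ) {w : Fin (d + 1) → E | HasPositiveRelation (s • w)} = 2 := by
  have hS (s : Fin (d + 1) → ℤˣ) :
      MeasurableSet {w : Fin (d + 1) → E | HasPositiveRelation (s • w)} :=
    (continuous_const_smul s).measurable measurableSet_setOf_hasPositiveRelation
  simp only [← lintegral_indicator_one (hS _)]
  rw [← lintegral_finsetSum _ fun s _ => measurable_one.indicator (hS s)]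
  refine (lintegral_congr_ae <| (ae_linearIndependent_comp_succAbove hμ hd).mono
    fun w hw => ?_).trans (by simp : ∫⁻ _, (2 : ℝ≥0∞) ∂(Measure.pi fun _ => μ) = 2)
  obtain ⟨c, hc, hrel⟩ := exists_relation_of_linearIndependent_comp_succAbove hd hw
  classical
  simp only [indicator_apply, mem_ofPred_eq, Pi.one_apply, Finset.sum_boole]
  exact_mod_cast card_filter_hasPositiveRelation_units_smul hc hrel

end Measure

theorem measure_submodule_eq_zero_of_hyperplane {n : ℕ} {μ : Measure (Fin n → ℝ)}
    (h : ∀ u : Fin n → ℝ, u ≠ 0 → μ {x | ∑ i, u i * x i = 0} = 0)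
    (S : Submodule ℝ (Fin n → ℝ)) (hS : S ≠ ⊤) : μ S = 0 := by
  obtain ⟨f, hf, hSf⟩ := S.exists_le_ker_of_lt_top hS.lt_top
  set u : Fin n → ℝ := fun i => f fun j => if i = j then 1 else 0
  have hfu (x : Fin n → ℝ) : f x = ∑ i, u i * x i := by
    simp [f.pi_apply_eq_sum_univ x, u, mul_comm]
  refine measure_mono_null (fun x hx => ?_) (h u fun hu => hf (LinearMap.ext fun x => ?_))
  · rw [mem_ofPred_eq, ← hfu]
    exact hSf hx
  · simp [hfu, hu]

theorem measure_zero_mem_interior_convexHull {E : Type*} [NormedAddCommGroup E]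
    [NormedSpace ℝ E] [FiniteDimensional ℝ E] [MeasurableSpace E] [BorelSpace E]
    (μ : Measure E) [IsProbabilityMeasure μ] (hsymm : μ.map Neg.neg = μ)
    (hμ : ∀ S : Submodule ℝ E, S ≠ ⊤ → μ S = 0) {d : ℕ} (hd : finrank ℝ E = d) :
    (Measure.pi fun _ : Fin (d + 1) => μ)
      {w | (0 : E) ∈ interior (convexHull ℝ (range w))} = (2 ^ d)⁻¹ := by
  set ν := Measure.pi fun _ : Fin (d + 1) => μ
  set R := {w : Fin (d + 1) → E | HasPositiveRelation w}
  have hAR : {w : Fin (d + 1) → E | (0 : E) ∈ interior (convexHull ℝ (range w))} =ᵐ[ν] R :=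
    (ae_linearIndependent_comp_succAbove hμ hd).mono fun w hw =>
      propext <| zero_mem_interior_convexHull_iff
        (span_range_eq_top_of_linearIndependent_comp_succAbove hd (hw 0))
  have hflip (s : Fin (d + 1) → ℤˣ) : ν {w | HasPositiveRelation (s • w)} = ν R :=
    (measurePreserving_units_smul hsymm s).measure_preimage
      measurableSet_setOf_hasPositiveRelation.nullMeasurableSet
  have hsum := sum_measure_setOf_hasPositiveRelation_units_smul hμ hd
  rw [Finset.sum_congr rfl fun s _ => hflip s, Finset.sum_const, Finset.card_univ,
    Fintype.card_fun, Fintype.card_units_int, Fintype.card_fin, nsmul_eq_mul] at hsum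
  have h2 : (2 : ℝ≥0∞) * (2 ^ d * ν R) = 2 * 1 := by
    rw [mul_one, ← mul_assoc, ← pow_succ']
    exact_mod_cast hsum
  rw [measure_congr hAR]
  exact ENNReal.eq_inv_of_mul_eq_one_left <| by
    rw [mul_comm]
    exact (ENNReal.mul_right_inj two_ne_zero ENNReal.ofNat_ne_top).mp h2

theorem stmt_12 (μ : Measure (Fin 3 → ℝ)) [IsProbabilityMeasure μ]
    (hsymm : μ.map (fun x => -x) = μ)
    (hnd : ∀ u : Fin 3 → ℝ, u ≠ 0 → μ {x | ∑ i, u i * x i = 0} = 0) :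
    (Measure.pi fun _ : Fin 4 => μ)
      {w : Fin 4 → (Fin 3 → ℝ) |
        (0 : Fin 3 → ℝ) ∈ interior (convexHull ℝ (Set.range w))} = 1/8 := by
  rw [measure_zero_mem_interior_convexHull μ hsymm (measure_submodule_eq_zero_of_hyperplane hnd)
    (d := 3) (by simp)]
  norm_num
end

section
/- For distinct reals t_1 < t_2 < ... < t_n with n ≥ 4, the vector configuration w_i = (-1)^i (1, t_i, t_i^2) in R^3 is coneighborly: every open linear halfspace {x : ⟨u, x⟩ > 0}, u ≠ 0, contains at least floor((n-2)/2) of the vectors w_i. -/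
/-!
Let `q(x) = u₀ + u₁ x + u₂ x²` and pair the indices as `{2k, 2k+1}`, `k < n/2`. A pair containing
no vector of the open halfspace has `q(t_{2k}) ≤ 0 ≤ q(t_{2k+1})`. Two such pairs would give the
sign pattern `≤ 0, ≥ 0, ≤ 0, ≥ 0` at four increasing points, which a nonzero quadratic cannot
have: on three consecutive points it would contradict strict convexity of `q` or of `-q`.
Hence all pairs but at most one meet the halfspace, which gives `n/2 - 1` vectors.
-/

open Finset

theorem quadratic_coeffs_eq_zero_of_convex_of_sign_changes {a b c x₁ x₂ x₃ : ℝ} (hc : 0 ≤ c)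
    (h₁₂ : x₁ < x₂) (h₂₃ : x₂ < x₃)
    (h₁ : a + b * x₁ + c * x₁ ^ 2 ≤ 0) (h₂ : 0 ≤ a + b * x₂ + c * x₂ ^ 2)
    (h₃ : a + b * x₃ + c * x₃ ^ 2 ≤ 0) : a = 0 ∧ b = 0 ∧ c = 0 := by
  have key : (x₃ - x₁) * (a + b * x₂ + c * x₂ ^ 2) = (x₃ - x₂) * (a + b * x₁ + c * x₁ ^ 2)
      + (x₂ - x₁) * (a + b * x₃ + c * x₃ ^ 2) - c * ((x₂ - x₁) * (x₃ - x₂) * (x₃ - x₁)) := by ring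
  have hpos : 0 < (x₂ - x₁) * (x₃ - x₂) * (x₃ - x₁) := by
    have := sub_pos.2 h₁₂; have := sub_pos.2 h₂₃; have := sub_pos.2 (h₁₂.trans h₂₃); positivity
  have hc0 : c = 0 := by
    nlinarith [mul_nonneg hc hpos.le, mul_nonneg (sub_pos.2 (h₁₂.trans h₂₃)).le h₂,
      mul_nonpos_of_nonneg_of_nonpos (sub_pos.2 h₂₃).le h₁,
      mul_nonpos_of_nonneg_of_nonpos (sub_pos.2 h₁₂).le h₃]
  subst hc0
  have hb : b = 0 := by nlinarith
  subst hb
  exact ⟨by linarith, rfl, rfl⟩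

theorem quadratic_coeffs_eq_zero_of_sign_changes {a b c x₁ x₂ x₃ x₄ : ℝ}
    (h₁₂ : x₁ < x₂) (h₂₃ : x₂ < x₃) (h₃₄ : x₃ < x₄)
    (h₁ : a + b * x₁ + c * x₁ ^ 2 ≤ 0) (h₂ : 0 ≤ a + b * x₂ + c * x₂ ^ 2)
    (h₃ : a + b * x₃ + c * x₃ ^ 2 ≤ 0) (h₄ : 0 ≤ a + b * x₄ + c * x₄ ^ 2) :
    a = 0 ∧ b = 0 ∧ c = 0 := by
  rcases le_total 0 c with hc | hc
  · exact quadratic_coeffs_eq_zero_of_convex_of_sign_changes hc h₁₂ h₂₃ h₁ h₂ h₃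
  · have := quadratic_coeffs_eq_zero_of_convex_of_sign_changes (a := -a) (b := -b) (c := -c)
      (neg_nonneg.2 hc) h₂₃ h₃₄ (by linarith) (by linarith) (by linarith)
    simpa only [neg_eq_zero] using this

theorem Fin.div_two_sub_one_le_card {n : ℕ} (S : Finset (Fin n))
    (hS : ∀ a b c d : Fin n, a < b → b < c → c < d → Even (a : ℕ) → Odd (b : ℕ) →
      Even (c : ℕ) → Odd (d : ℕ) → a ∈ S ∨ b ∈ S ∨ c ∈ S ∨ d ∈ S) :
    n / 2 - 1 ≤ #S := by
  -- `P` is the set of pairs `{2k, 2k+1}` meeting `S`.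
  set P := S.image fun i : Fin n => (i : ℕ) / 2
  have hmiss : #(range (n / 2) \ P) ≤ 1 := by
    rw [card_le_one]
    intro k hk k' hk'
    by_contra hne
    wlog hlt : k < k' generalizing k k'
    · exact this k' hk' k hk (Ne.symm hne) (by omega)
    simp only [P, mem_sdiff, mem_range, mem_image, not_exists, not_and] at hk hk'
    rcases hS ⟨2 * k, by omega⟩ ⟨2 * k + 1, by omega⟩ ⟨2 * k', by omega⟩ ⟨2 * k' + 1, by omega⟩
      (by simp [Fin.lt_def]) (by simp [Fin.lt_def]; omega) (by simp [Fin.lt_def])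
      (by simp) (by simp) (by simp) (by simp) with h | h | h | h
    · exact hk.2 _ h (by simp)
    · exact hk.2 _ h (by simp; omega)
    · exact hk'.2 _ h (by simp)
    · exact hk'.2 _ h (by simp; omega)
  have hP : #P ≤ #S := card_image_le
  have := le_card_sdiff P (range (n / 2))
  rw [card_range] at this
  omega

theorem stmt_16_general (n : ℕ) (t : Fin n → ℝ) (ht : StrictMono t)
    (u : Fin 3 → ℝ) (hu : u ≠ 0) :
    (n - 2)/2 ≤ (Finset.univ.filter (fun i : Fin n =>
      0 < ((-1 : ℝ)^(i : ℕ)) * (u 0 + u 1 * t i + u 2 * (t i)^2))).card := by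
  set q : ℝ → ℝ := fun x => u 0 + u 1 * x + u 2 * x ^ 2
  have nonpos_of_even {i : Fin n} (hi : Even (i : ℕ)) (h : ¬ 0 < (-1 : ℝ) ^ (i : ℕ) * q (t i)) :
      q (t i) ≤ 0 := by
    simpa [hi.neg_one_pow] using h
  have nonneg_of_odd {i : Fin n} (hi : Odd (i : ℕ)) (h : ¬ 0 < (-1 : ℝ) ^ (i : ℕ) * q (t i)) :
      0 ≤ q (t i) := by
    simpa [hi.neg_one_pow] using h
  rw [show (n - 2) / 2 = n / 2 - 1 by omega]
  refine Fin.div_two_sub_one_le_card _ fun a b c d hab hbc hcd ha hb hc hd => ?_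
  by_contra! h
  simp only [mem_filter, mem_univ, true_and] at h
  obtain ⟨h0, h1, h2⟩ := quadratic_coeffs_eq_zero_of_sign_changes (ht hab) (ht hbc) (ht hcd)
    (nonpos_of_even ha h.1) (nonneg_of_odd hb h.2.1)
    (nonpos_of_even hc h.2.2.1) (nonneg_of_odd hd h.2.2.2)
  exact hu (funext fun i => by fin_cases i <;> assumption)

theorem stmt_16 (n : ℕ) (hn : 4 ≤ n) (t : Fin n → ℝ) (ht : StrictMono t)
    (u : Fin 3 → ℝ) (hu : u ≠ 0) :
    (n - 2)/2 ≤ (Finset.univ.filter (fun i : Fin n =>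
      0 < ((-1 : ℝ)^(i : ℕ)) * (u 0 + u 1 * t i + u 2 * (t i)^2))).card :=
  stmt_16_general n t ht u hu
end

section
/- Let V be a configuration of n unit vectors in general position in S^2 ⊂ R^3 (every 3 linearly independent, no two antipodal). Two shortest geodesic arcs connecting pairs {v_a, v_b} and {v_c, v_d} with {a,b} ∩ {c,d} = ∅ cross in exactly one point if and only if the quadruple {v_a, v_b, v_c, v_d} spans a pointed cone with four extremal rays and, in cyclic order around that cone, the pairs {v_a,v_b} and {v_c,v_d} interleave; equivalently, iff there is a linear dependency λ_a v_a + λ_b v_b + λ_c v_c + λ_d v_d = 0 with λ_a, λ_b > 0 and λ_c, λ_d < 0 (up to global sign). -/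
open scoped RealInnerProductSpace

/-- The relative interior of the shortest geodesic arc on `S²` between the
non-antipodal unit vectors `u` and `w`: normalized strictly positive combinations. -/
def openArc (u w : EuclideanSpace ℝ (Fin 3)) : Set (EuclideanSpace ℝ (Fin 3)) :=
  {x | ∃ α β : ℝ, 0 < α ∧ 0 < β ∧ x = ‖α • u + β • w‖⁻¹ • (α • u + β • w)}

private lemma indep2' {n : ℕ} {v : Fin n → EuclideanSpace ℝ (Fin 3)}
    (hgen : ∀ s : Finset (Fin n), s.card ≤ 3 →
      LinearIndependent ℝ (fun i : s => v i))
    {i j : Fin n} (hij : i ≠ j) {α β : ℝ} (h : α • v i + β • v j = 0) :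
    α = 0 ∧ β = 0 := by
  have hcard : ({i, j} : Finset (Fin n)).card ≤ 3 := by
    have h1 := Finset.card_insert_le i ({j} : Finset (Fin n))
    have h2 : ({j} : Finset (Fin n)).card = 1 := Finset.card_singleton j
    omega
  have hli := (Fintype.linearIndependent_iff).mp (hgen _ hcard)
  set G : Fin n → ℝ := fun x => if x = i then α else β with hG
  have hsum : ∑ x : ({i, j} : Finset (Fin n)), G x • v x = 0 := by
    rw [Finset.sum_coe_sort ({i, j} : Finset (Fin n)) (fun x => G x • v x),
      Finset.sum_insert (by simp [hij]), Finset.sum_singleton]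
    simpa [hG, Ne.symm hij] using h
  constructor
  · have := hli (fun x => G x) hsum ⟨i, by simp⟩
    simpa [hG] using this
  · have := hli (fun x => G x) hsum ⟨j, by simp⟩
    simpa [hG, Ne.symm hij] using this

private lemma indep3' {n : ℕ} {v : Fin n → EuclideanSpace ℝ (Fin 3)}
    (hgen : ∀ s : Finset (Fin n), s.card ≤ 3 →
      LinearIndependent ℝ (fun i : s => v i))
    {i j k : Fin n} (hij : i ≠ j) (hik : i ≠ k) (hjk : j ≠ k)
    {α β γ : ℝ} (h : α • v i + β • v j + γ • v k = 0) :
    α = 0 ∧ β = 0 ∧ γ = 0 := by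
  have hcard : ({i, j, k} : Finset (Fin n)).card ≤ 3 := by
    have h1 := Finset.card_insert_le i ({j, k} : Finset (Fin n))
    have h2 := Finset.card_insert_le j ({k} : Finset (Fin n))
    have h3 : ({k} : Finset (Fin n)).card = 1 := Finset.card_singleton k
    omega
  have hli := (Fintype.linearIndependent_iff).mp (hgen _ hcard)
  set G : Fin n → ℝ := fun x => if x = i then α else if x = j then β else γ with hG
  have hsum : ∑ x : ({i, j, k} : Finset (Fin n)), G x • v x = 0 := by
    rw [Finset.sum_coe_sort ({i, j, k} : Finset (Fin n)) (fun x => G x • v x),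
      Finset.sum_insert (by simp [hij, hik]), Finset.sum_insert (by simp [hjk]),
      Finset.sum_singleton]
    simpa [hG, Ne.symm hij, Ne.symm hik, Ne.symm hjk, add_assoc] using h
  refine ⟨?_, ?_, ?_⟩
  · have := hli (fun x => G x) hsum ⟨i, by simp⟩
    simpa [hG] using this
  · have := hli (fun x => G x) hsum ⟨j, by simp⟩
    simpa [hG, Ne.symm hij] using this
  · have := hli (fun x => G x) hsum ⟨k, by simp⟩
    simpa [hG, Ne.symm hik, Ne.symm hjk] using this

private lemma normalize_smul {E : Type*} [NormedAddCommGroup E] [NormedSpace ℝ E]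
    {s : ℝ} (hs : 0 < s) (x : E) :
    ‖s • x‖⁻¹ • (s • x) = ‖x‖⁻¹ • x := by
  have hs' : s ≠ 0 := hs.ne'
  rw [norm_smul, Real.norm_of_nonneg hs.le, mul_inv, smul_smul]
  rw [show s⁻¹ * ‖x‖⁻¹ * s = ‖x‖⁻¹ by rw [mul_comm, ← mul_assoc, mul_inv_cancel₀ hs', one_mul]]

private lemma cross_eq {E : Type*} [NormedAddCommGroup E] [NormedSpace ℝ E]
    {p q : E} (hp : p ≠ 0) (hq : q ≠ 0) (h : ‖p‖⁻¹ • p = ‖q‖⁻¹ • q) :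
    ‖q‖ • p = ‖p‖ • q := by
  have hp' : ‖p‖ ≠ 0 := norm_ne_zero_iff.mpr hp
  have hq' : ‖q‖ ≠ 0 := norm_ne_zero_iff.mpr hq
  have h2 := congrArg (fun z : E => (‖p‖ * ‖q‖) • z) h
  simp only [smul_smul] at h2
  rw [show ‖p‖ * ‖q‖ * ‖p‖⁻¹ = ‖q‖ by field_simp,
    show ‖p‖ * ‖q‖ * ‖q‖⁻¹ = ‖p‖ by field_simp] at h2
  exact h2

theorem stmt_18 (n : ℕ) (v : Fin n → EuclideanSpace ℝ (Fin 3))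
    (hunit : ∀ i, ‖v i‖ = 1)
    (hgen : ∀ s : Finset (Fin n), s.card ≤ 3 →
      LinearIndependent ℝ (fun i : s => v i))
    (a b c d : Fin n) (hdist : ({a, b, c, d} : Finset (Fin n)).card = 4) :
    (∃! x, x ∈ openArc (v a) (v b) ∩ openArc (v c) (v d)) ↔
      ∃ la lb lc ld : ℝ, 0 < la ∧ 0 < lb ∧ lc < 0 ∧ ld < 0 ∧
        la • v a + lb • v b + lc • v c + ld • v d = 0 := by
  have card3 : ∀ x y z : Fin n, ({x, y, z} : Finset (Fin n)).card ≤ 3 := by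
    intro x y z
    have h1 := Finset.card_insert_le x ({y, z} : Finset (Fin n))
    have h2 := Finset.card_insert_le y ({z} : Finset (Fin n))
    have h3 : ({z} : Finset (Fin n)).card = 1 := Finset.card_singleton z
    omega
  have hsub : ∀ x y z : Fin n, ({a, b, c, d} : Finset (Fin n)) ⊆ {x, y, z} → False := by
    intro x y z hss
    have h1 := Finset.card_le_card hss
    have h2 := card3 x y z
    omega
  have hab : a ≠ b := by
    rintro rfl; exact hsub a c d (by intro x hx; simp at hx ⊢; tauto)
  have hbc : b ≠ c := by
    rintro rfl; exact hsub a b d (by intro x hx; simp at hx ⊢; tauto)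
  have hbd : b ≠ d := by
    rintro rfl; exact hsub a b c (by intro x hx; simp at hx ⊢; tauto)
  have hcd : c ≠ d := by
    rintro rfl; exact hsub a b c (by intro x hx; simp at hx ⊢; tauto)
  constructor
  · rintro ⟨x, ⟨⟨α, β, hα, hβ, hx1⟩, ⟨γ, δ, hγ, hδ, hx2⟩⟩, -⟩
    set p := α • v a + β • v b with hp
    set q := γ • v c + δ • v d with hq
    have hp0 : p ≠ 0 := by
      intro h0
      exact hα.ne' (indep2' hgen hab h0).1
    have hq0 : q ≠ 0 := by
      intro h0
      exact hγ.ne' (indep2' hgen hcd h0).1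
    have hcross : ‖q‖ • p = ‖p‖ • q := cross_eq hp0 hq0 (hx1.symm.trans hx2)
    refine ⟨‖q‖ * α, ‖q‖ * β, -(‖p‖ * γ), -(‖p‖ * δ),
      mul_pos (norm_pos_iff.mpr hq0) hα, mul_pos (norm_pos_iff.mpr hq0) hβ,
      neg_lt_zero.mpr (mul_pos (norm_pos_iff.mpr hp0) hγ),
      neg_lt_zero.mpr (mul_pos (norm_pos_iff.mpr hp0) hδ), ?_⟩
    have key : (‖q‖ * α) • v a + (‖q‖ * β) • v b + (-(‖p‖ * γ)) • v c + (-(‖p‖ * δ)) • v d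
        = ‖q‖ • p - ‖p‖ • q := by
      rw [hp, hq]; module
    rw [key, hcross, sub_self]
  · rintro ⟨la, lb, lc, ld, hla, hlb, hlc, hld, hsum⟩
    have hx0' : la • v a + lb • v b = (-lc) • v c + (-ld) • v d := by
      have h1 : la • v a + lb • v b - ((-lc) • v c + (-ld) • v d)
          = la • v a + lb • v b + lc • v c + ld • v d := by module
      exact sub_eq_zero.mp (h1.trans hsum)
    have hx00 : la • v a + lb • v b ≠ 0 := by
      intro h0
      exact hla.ne' (indep2' hgen hab h0).1
    refine ⟨‖la • v a + lb • v b‖⁻¹ • (la • v a + lb • v b),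
      ⟨⟨la, lb, hla, hlb, rfl⟩,
       ⟨-lc, -ld, neg_pos.mpr hlc, neg_pos.mpr hld, by rw [← hx0']⟩⟩, ?_⟩
    rintro y ⟨⟨α, β, hα, hβ, hy1⟩, ⟨γ, δ, hγ, hδ, hy2⟩⟩
    set p := α • v a + β • v b with hp
    set q := γ • v c + δ • v d with hq
    have hp0 : p ≠ 0 := by
      intro h0
      exact hα.ne' (indep2' hgen hab h0).1
    have hq0 : q ≠ 0 := by
      intro h0
      exact hγ.ne' (indep2' hgen hcd h0).1
    have hqn : (0:ℝ) < ‖q‖ := norm_pos_iff.mpr hq0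
    have hcross : ‖q‖ • p = ‖p‖ • q := cross_eq hp0 hq0 (hy1.symm.trans hy2)
    have hdep : (‖q‖ * α) • v a + (‖q‖ * β) • v b + (-(‖p‖ * γ)) • v c + (-(‖p‖ * δ)) • v d
        = 0 := by
      have key : (‖q‖ * α) • v a + (‖q‖ * β) • v b + (-(‖p‖ * γ)) • v c + (-(‖p‖ * δ)) • v d
          = ‖q‖ • p - ‖p‖ • q := by
        rw [hp, hq]; module
      rw [key, hcross, sub_self]
    -- eliminate the `a` coordinate between hdep and hsum
    have hcomb : (la * (‖q‖ * β) - (‖q‖ * α) * lb) • v b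
        + (la * (-(‖p‖ * γ)) - (‖q‖ * α) * lc) • v c
        + (la * (-(‖p‖ * δ)) - (‖q‖ * α) * ld) • v d = 0 := by
      have h1 : (la * (‖q‖ * β) - (‖q‖ * α) * lb) • v b
          + (la * (-(‖p‖ * γ)) - (‖q‖ * α) * lc) • v c
          + (la * (-(‖p‖ * δ)) - (‖q‖ * α) * ld) • v d
          = la • ((‖q‖ * α) • v a + (‖q‖ * β) • v b + (-(‖p‖ * γ)) • v c + (-(‖p‖ * δ)) • v d)
            - (‖q‖ * α) • (la • v a + lb • v b + lc • v c + ld • v d) := by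
        module
      rw [h1, hdep, hsum, smul_zero, smul_zero, sub_self]
    obtain ⟨e1, -, -⟩ := indep3' hgen hbc hbd hcd hcomb
    set t : ℝ := (‖q‖ * α) / la with ht
    have htpos : 0 < t := div_pos (mul_pos hqn hα) hla
    have hA : ‖q‖ * α = t * la := by
      rw [ht]; field_simp
    have hB : ‖q‖ * β = t * lb := by
      rw [ht, div_mul_eq_mul_div, eq_div_iff hla.ne']
      linear_combination e1
    have hqp : ‖q‖ • p = t • (la • v a + lb • v b) := by
      calc ‖q‖ • p = (‖q‖ * α) • v a + (‖q‖ * β) • v b := by rw [hp]; module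
        _ = (t * la) • v a + (t * lb) • v b := by rw [hA, hB]
        _ = t • (la • v a + lb • v b) := by module
    have hps : p = (t / ‖q‖) • (la • v a + lb • v b) := by
      have h2 := congrArg (fun z : EuclideanSpace ℝ (Fin 3) => ‖q‖⁻¹ • z) hqp
      simp only [smul_smul] at h2
      rw [inv_mul_cancel₀ hqn.ne', one_smul] at h2
      rw [h2]
      congr 1
      field_simp
    rw [hy1, hps, normalize_smul (div_pos htpos hqn)]
end
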